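/- arXiv:1407.0607 — 3 statements merged into one kernel-verified Lean document; each statement's English description precedes it below -/
import Mathlib

section
/- If j ≡ 0 (mod i) for positive integers i, j, and gcd(j/i, 3) = 1, then p^(2i) + p^i + 1 divides p^(2j) + p^j + 1 for any prime p. -/
theorem stmt_0 (p i j : ℕ) (hp : p.Prime) (hi : 0 < i) (hj : 0 < j)
    (hij : i ∣ j) (h3 : Nat.Coprime (j / i) 3) :
    p ^ (2 * i) + p ^ i + 1 ∣ p ^ (2 * j) + p ^ j + 1 := by
  obtain ⟨k, rfl⟩ := hij
  rw [Nat.mul_div_cancel_left k hi] at h3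
  have h3k : ¬ (3 ∣ k) := by
    intro h
    have h1 : 3 ∣ Nat.gcd k 3 := Nat.dvd_gcd h dvd_rfl
    rw [h3] at h1
    omega
  set x : ℤ := (p : ℤ) ^ i with hx
  have hcube : x ^ 3 ≡ 1 [ZMOD (x ^ 2 + x + 1)] :=
    Int.modEq_iff_dvd.mpr ⟨1 - x, by ring⟩
  have hpow : ∀ n : ℕ, x ^ n ≡ x ^ (n % 3) [ZMOD (x ^ 2 + x + 1)] := by
    intro n
    conv_lhs => rw [show n = 3 * (n / 3) + n % 3 from (Nat.div_add_mod n 3).symm]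
    rw [pow_add, pow_mul]
    calc (x ^ 3) ^ (n / 3) * x ^ (n % 3)
        ≡ 1 ^ (n / 3) * x ^ (n % 3) [ZMOD (x ^ 2 + x + 1)] :=
          (hcube.pow _).mul_right _
      _ = x ^ (n % 3) := by rw [one_pow, one_mul]
  have key : x ^ 2 + x + 1 ∣ x ^ (2 * k) + x ^ k + 1 := by
    have hmod : x ^ (2 * k) + x ^ k + 1 ≡ x ^ (2 * k % 3) + x ^ (k % 3) + 1
        [ZMOD (x ^ 2 + x + 1)] := ((hpow (2 * k)).add (hpow k)).add_right 1
    have hself : x ^ 2 + x + 1 ≡ 0 [ZMOD (x ^ 2 + x + 1)] :=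
      Int.modEq_zero_iff_dvd.mpr dvd_rfl
    rcases (by omega : k % 3 = 1 ∨ k % 3 = 2) with hr | hr
    · have h2 : 2 * k % 3 = 2 := by omega
      rw [hr, h2] at hmod
      exact Int.modEq_zero_iff_dvd.mp (hmod.trans (by rw [pow_one]; exact hself))
    · have h2 : 2 * k % 3 = 1 := by omega
      rw [hr, h2] at hmod
      refine Int.modEq_zero_iff_dvd.mp (hmod.trans ?_)
      have : x ^ 1 + x ^ 2 + 1 = x ^ 2 + x + 1 := by ring
      rw [this]; exact hself
  have hfin : ((p : ℤ) ^ (2 * (i * k)) + (p : ℤ) ^ (i * k) + 1 : ℤ) =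
      x ^ (2 * k) + x ^ k + 1 := by
    rw [hx, ← pow_mul, ← pow_mul]; ring_nf
  zify
  rw [hfin]
  calc ((p : ℤ) ^ (2 * i) + (p : ℤ) ^ i + 1 : ℤ) = x ^ 2 + x + 1 := by
        rw [hx, ← pow_mul]; ring_nf
    _ ∣ x ^ (2 * k) + x ^ k + 1 := key
end

section
/- A group acting freely on the points of a projective plane (a Singer group) contains no involutions: if a collineation σ of a projective plane satisfies σ² = 1 and σ ≠ 1, then σ fixes some point. -/
/-- A nontrivial involutory collineation of a projective plane fixes a point;
hence a Singer group (acting freely on points) contains no involutions. -/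
theorem stmt_6 (P L : Type) (mem : Membership P L)
    (pp : @Configuration.ProjectivePlane P L mem)
    (σ : P ≃ P) (τ : L ≃ L)
    (hcol : ∀ (p : P) (l : L), mem.mem l p ↔ mem.mem (τ l) (σ p))
    (hσ2 : ∀ p, σ (σ p) = p) (hτ2 : ∀ l, τ (τ l) = l)
    (hσ1 : σ ≠ Equiv.refl P) :
    ∃ p : P, σ p = p := by
  letI := mem
  letI := pp
  by_contra hfix
  push_neg at hfix
  -- every line joining q and σ q is fixed by τ
  have key : ∀ q : P, ∀ h : σ q ≠ q,
      τ (Configuration.HasLines.mkLine (L := L) h) = Configuration.HasLines.mkLine (L := L) h := by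
    intro q h
    set l := Configuration.HasLines.mkLine (L := L) h with hl
    have hax := Configuration.HasLines.mkLine_ax (L := L) h
    have h1 : mem.mem (τ l) (σ (σ q)) := (hcol (σ q) l).mp hax.1
    have h2 : mem.mem (τ l) (σ q) := (hcol q l).mp hax.2
    rw [hσ2] at h1
    rcases Configuration.Nondegenerate.eq_or_eq h2 h1 hax.1 hax.2 with h' | h'
    · exact absurd h' h
    · exact h'
  -- pick a point p with σ p ≠ p (all points qualify)
  obtain ⟨p⟩ := (Configuration.ProjectivePlane.exists_config (P := P) (L := L)).imp
    (fun p _ => trivial)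
  have hp : σ p ≠ p := hfix p
  set l := Configuration.HasLines.mkLine (L := L) hp with hl
  have hτl : τ l = l := key p hp
  -- pick q off l
  obtain ⟨q, hq⟩ := Configuration.Nondegenerate.exists_point (P := P) l
  have hq' : σ q ≠ q := hfix q
  set m := Configuration.HasLines.mkLine (L := L) hq' with hm
  have hτm : τ m = m := key q hq'
  have hlm : l ≠ m := fun h => hq (h ▸ (Configuration.HasLines.mkLine_ax (L := L) hq').2)
  set x := Configuration.HasPoints.mkPoint (P := P) hlm with hx
  have hax := Configuration.HasPoints.mkPoint_ax (P := P) hlm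
  have h1 : mem.mem l (σ x) := by have := (hcol x l).mp hax.1; rwa [hτl] at this
  have h2 : mem.mem m (σ x) := by have := (hcol x m).mp hax.2; rwa [hτm] at this
  rcases Configuration.Nondegenerate.eq_or_eq h1 hax.1 h2 hax.2 with h' | h'
  · exact hfix x h'
  · exact hlm h'
end

section
/- Let H be an abelian subgroup of GL(V) acting sharply transitively on the nonzero vectors of a vector space V over a field F with dim V ≥ 1. Then H contains all scalar transformations λ·id for λ ∈ Fˣ. -/
/-- An abelian subgroup of `GL(V)` acting sharply transitively on the nonzero
vectors of a nontrivial `F`-vector space `V` contains all scalar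
transformations. -/
theorem stmt_18 (F : Type*) [Field F] (V : Type*) [AddCommGroup V]
    [Module F V] [Nontrivial V]
    (H : Subgroup (LinearMap.GeneralLinearGroup F V))
    (habelian : ∀ a ∈ H, ∀ b ∈ H, a * b = b * a)
    (htrans : ∀ v w : V, v ≠ 0 → w ≠ 0 →
      ∃ g ∈ H, (g : V →ₗ[F] V) v = w)
    (hfree : ∀ g ∈ H, ∀ v : V, v ≠ 0 → (g : V →ₗ[F] V) v = v → g = 1) :
    ∀ c : Fˣ, ∃ g ∈ H, ∀ v : V, (g : V →ₗ[F] V) v = (c : F) • v := by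
  intro c
  obtain ⟨v₀, hv₀⟩ := exists_ne (0 : V)
  obtain ⟨g, hgH, hg⟩ := htrans v₀ ((c : F) • v₀) hv₀ (smul_ne_zero c.ne_zero hv₀)
  refine ⟨g, hgH, fun v => ?_⟩
  by_cases hv : v = 0
  · simp [hv]
  obtain ⟨h, hhH, hh⟩ := htrans v₀ v hv₀ hv
  have comm := habelian g hgH h hhH
  have key : (g : V →ₗ[F] V) ((h : V →ₗ[F] V) v₀)
      = (h : V →ₗ[F] V) ((g : V →ₗ[F] V) v₀) := by
    have := congrArg (fun u : LinearMap.GeneralLinearGroup F V =>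
      (u : V →ₗ[F] V) v₀) comm
    simpa [Units.val_mul, Module.End.mul_apply] using this
  calc (g : V →ₗ[F] V) v = (g : V →ₗ[F] V) ((h : V →ₗ[F] V) v₀) := by rw [hh]
    _ = (h : V →ₗ[F] V) ((g : V →ₗ[F] V) v₀) := key
    _ = (h : V →ₗ[F] V) ((c : F) • v₀) := by rw [hg]
    _ = (c : F) • (h : V →ₗ[F] V) v₀ := map_smul _ _ _
    _ = (c : F) • v := by rw [hh]
end
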